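/- arXiv:1602.01244 — 3 statements merged into one kernel-verified Lean document; each statement's English description precedes it below -/
import Mathlib

section
/- Let X be a CAT(0) space, γ a hyperbolic isometry of X with translation axis A, x a point of X with projection x⊥ on A, and suppose the geodesic segment [x, γx] meets the segment [x⊥, γx⊥] at some point y. Then d(x, γx)² ≥ ℓ(γ)² + 2·d(x, x⊥)², where ℓ(γ) is the translation length of γ. -/
open Metric Set

noncomputable section

/-- A metric space is CAT(0) if midpoints exist and the CN (Bruhat–Tits) comparison
inequality holds. -/
def CAT0 (X : Type*) [MetricSpace X] : Prop :=
  (∀ x y : X, ∃ m : X, dist x m = dist x y / 2 ∧ dist m y = dist x y / 2) ∧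
  ∀ x y z m : X, dist y m = dist y z / 2 → dist m z = dist y z / 2 →
    dist x m ^ 2 ≤ (dist x y ^ 2 + dist x z ^ 2) / 2 - dist y z ^ 2 / 4

/-- The translation length `ℓ(γ) = inf_{x ∈ X} d(x, γ x)` of an isometry `γ` of `X`. -/
noncomputable def translationLength {X : Type*} [MetricSpace X] (γ : X ≃ᵢ X) : ℝ :=
  ⨅ x : X, dist x (γ x)

/-- `A` is a translation axis of `γ`: a `γ`-invariant geodesic line on which `γ`
translates by its translation length. -/
def IsTranslationAxis {X : Type*} [MetricSpace X] (γ : X ≃ᵢ X) (A : Set X) : Prop :=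
  ∃ g : ℝ → X, Isometry g ∧ Set.range g = A ∧
    ∀ t : ℝ, γ (g t) = g (t + translationLength γ)

lemma cat0_line_convex {X : Type*} [MetricSpace X] (hX : CAT0 X)
    (g : ℝ → X) (hg : Isometry g) (x : X) (s t : ℝ) :
    dist x (g ((s + t) / 2)) ^ 2 ≤
      (dist x (g s) ^ 2 + dist x (g t) ^ 2) / 2 - (t - s) ^ 2 / 4 := by
  have hd : ∀ a b : ℝ, dist (g a) (g b) = |a - b| := fun a b => by
    rw [hg.dist_eq, Real.dist_eq]
  have h1 : dist (g s) (g ((s + t) / 2)) = dist (g s) (g t) / 2 := by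
    rw [hd, hd, show s - (s + t) / 2 = (s - t) / 2 by ring, abs_div]
    simp
  have h2 : dist (g ((s + t) / 2)) (g t) = dist (g s) (g t) / 2 := by
    rw [hd, hd, show (s + t) / 2 - t = (s - t) / 2 by ring, abs_div]
    simp
  have h3 := hX.2 x (g s) (g t) (g ((s + t) / 2)) h1 h2
  rw [hd s t] at h3
  have hsq : |s - t| ^ 2 = (t - s) ^ 2 := by rw [sq_abs]; ring
  linarith [hsq.le, hsq.ge]

lemma proj_pythagoras {X : Type*} [MetricSpace X] (hX : CAT0 X)
    (g : ℝ → X) (hg : Isometry g) (x : X) (t₀ : ℝ)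
    (hmin : ∀ t, dist x (g t₀) ≤ dist x (g t)) (t₁ : ℝ) :
    dist x (g t₀) ^ 2 + (t₁ - t₀) ^ 2 ≤ dist x (g t₁) ^ 2 := by
  set r := t₁ - t₀ with hr
  set G : ℝ → ℝ := fun u => dist x (g (t₀ + u)) ^ 2 - u ^ 2 with hG
  have hconv : ∀ s t : ℝ, G ((s + t) / 2) ≤ (G s + G t) / 2 := by
    intro s t
    have h := cat0_line_convex hX g hg x (t₀ + s) (t₀ + t)
    rw [show (t₀ + s + (t₀ + t)) / 2 = t₀ + (s + t) / 2 by ring] at h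
    simp only [hG]
    nlinarith [h]
  have hlow : ∀ u : ℝ, G 0 - u ^ 2 ≤ G u := by
    intro u
    have h1 := hmin (t₀ + u)
    have h2 : dist x (g t₀) ^ 2 ≤ dist x (g (t₀ + u)) ^ 2 := by
      nlinarith [dist_nonneg (x := x) (y := g t₀)]
    simp only [hG]
    simpa using h2
  have key : ∀ n : ℕ, G (r / 2 ^ n) ≤ G 0 + (G r - G 0) / 2 ^ n := by
    intro n
    induction n with
    | zero => simp
    | succ n ih =>
      have h1 : G (r / 2 ^ (n + 1)) ≤ (G 0 + G (r / 2 ^ n)) / 2 := by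
        have h := hconv 0 (r / 2 ^ n)
        rw [show (0 + r / 2 ^ n) / 2 = r / 2 ^ (n + 1) by ring] at h
        exact h
      have h2 : (0:ℝ) < 2 ^ n := by positivity
      calc G (r / 2 ^ (n + 1)) ≤ (G 0 + G (r / 2 ^ n)) / 2 := h1
        _ ≤ (G 0 + (G 0 + (G r - G 0) / 2 ^ n)) / 2 := by linarith
        _ = G 0 + (G r - G 0) / 2 ^ (n + 1) := by field_simp; ring
  have hGr : G 0 ≤ G r := by
    by_contra hcon
    push_neg at hcon
    set ε := G 0 - G r with hε
    have hεpos : 0 < ε := by simp only [hε]; linarith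
    obtain ⟨n, hn⟩ := pow_unbounded_of_one_lt (r ^ 2 / ε) (by norm_num : (1:ℝ) < 2)
    have h2n : (0:ℝ) < 2 ^ n := by positivity
    have h := le_trans (hlow (r / 2 ^ n)) (key n)
    rw [div_pow, show G r - G 0 = -ε by rw [hε]; ring, neg_div] at h
    have h' : ε / 2 ^ n ≤ r ^ 2 / ((2:ℝ) ^ n) ^ 2 := by linarith
    have h'' : ε * ((2:ℝ) ^ n) ^ 2 ≤ r ^ 2 * 2 ^ n :=
      (div_le_div_iff₀ h2n (by positivity)).mp h'
    have e2 : ε * 2 ^ n ≤ r ^ 2 := by nlinarith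
    have e1 : r ^ 2 < 2 ^ n * ε := (div_lt_iff₀ hεpos).mp hn
    nlinarith
  simp only [hG] at hGr
  have h0 : t₀ + r = t₁ := by rw [hr]; ring
  rw [h0] at hGr
  norm_num at hGr
  linarith

/-- Let `X` be a complete CAT(0) space, `γ` a hyperbolic isometry of `X`
with translation axis `A`, `x` a point of `X` with projection `x⊥` on `A`, and suppose
the geodesic segment `[x, γx]` meets the segment `[x⊥, γx⊥]` at some point `y`
(membership on a segment is expressed by additivity of distances, since `X` is uniquely
geodesic). Then `d(x, γx)² ≥ ℓ(γ)² + 2·d(x, x⊥)²`. -/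
theorem dist_sq_ge_of_segment_meets_axis
    {X : Type*} [MetricSpace X] [CompleteSpace X] (hX : CAT0 X)
    (γ : X ≃ᵢ X) (hhyp : 0 < translationLength γ)
    (A : Set X) (hA : IsTranslationAxis γ A)
    (x xp : X) (hxpA : xp ∈ A) (hproj : ∀ a ∈ A, dist x xp ≤ dist x a)
    (y : X) (hyA : y ∈ A)
    (hy_on_xγx : dist x y + dist y (γ x) = dist x (γ x))
    (hy_on_axis_seg : dist xp y + dist y (γ xp) = dist xp (γ xp)) :
    translationLength γ ^ 2 + 2 * dist x xp ^ 2 ≤ dist x (γ x) ^ 2 := by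
  obtain ⟨g, hg, hrange, htrans⟩ := hA
  set L := translationLength γ with hL
  have hd : ∀ a b : ℝ, dist (g a) (g b) = |a - b| := fun a b => by
    rw [hg.dist_eq, Real.dist_eq]
  obtain ⟨t₀, ht₀⟩ : ∃ t₀, g t₀ = xp := by rw [← hrange] at hxpA; exact hxpA
  obtain ⟨t₁, ht₁⟩ : ∃ t₁, g t₁ = y := by rw [← hrange] at hyA; exact hyA
  have hmin1 : ∀ t, dist x (g t₀) ≤ dist x (g t) := by
    intro t
    rw [ht₀]
    exact hproj (g t) (hrange ▸ Set.mem_range_self t)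
  have P1 := proj_pythagoras hX g hg x t₀ hmin1 t₁
  have hγxp : γ xp = g (t₀ + L) := by rw [← ht₀, htrans]
  have hmin2 : ∀ t, dist (γ x) (g (t₀ + L)) ≤ dist (γ x) (g t) := by
    intro t
    have hgt : γ (g (t - L)) = g t := by
      rw [htrans]; norm_num
    calc dist (γ x) (g (t₀ + L)) = dist x (g t₀) := by
          rw [← htrans, γ.dist_eq]
      _ ≤ dist x (g (t - L)) := hmin1 _
      _ = dist (γ x) (γ (g (t - L))) := (γ.dist_eq _ _).symm
      _ = dist (γ x) (g t) := by rw [hgt]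
  have P2 := proj_pythagoras hX g hg (γ x) (t₀ + L) hmin2 t₁
  -- rewrite everything in terms of distances
  have e0 : dist (γ x) (g (t₀ + L)) = dist x xp := by
    rw [← htrans, γ.dist_eq, ht₀]
  rw [ht₀, ht₁] at P1
  rw [e0, ht₁, dist_comm (γ x) y] at P2
  -- distances along the axis
  have hp : dist xp y = |t₁ - t₀| := by
    rw [← ht₀, ← ht₁, hd, abs_sub_comm]
  have hq : dist y (γ xp) = |t₁ - t₀ - L| := by
    rw [← ht₁, hγxp, hd]
    congr 1; ring
  have hLd : dist xp (γ xp) = L := by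
    rw [hγxp, ← ht₀, hd, show t₀ - (t₀ + L) = -L by ring, abs_neg,
      abs_of_pos hhyp]
  rw [hp, hq, hLd] at hy_on_axis_seg
  set a := dist x y
  set b := dist y (γ x)
  set h := dist x xp
  set p := |t₁ - t₀|
  set q := |t₁ - t₀ - L|
  have hp2 : p ^ 2 = (t₁ - t₀) ^ 2 := sq_abs _
  have hq2 : q ^ 2 = (t₁ - t₀ - L) ^ 2 := sq_abs _
  have P1' : h ^ 2 + p ^ 2 ≤ a ^ 2 := by rw [hp2]; linarith
  have P2' : h ^ 2 + q ^ 2 ≤ b ^ 2 := by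
    rw [hq2]
    have : t₁ - (t₀ + L) = t₁ - t₀ - L := by ring
    linarith [this ▸ P2]
  have ha : 0 ≤ a := dist_nonneg
  have hb : 0 ≤ b := dist_nonneg
  have hh : 0 ≤ h := dist_nonneg
  have hpn : 0 ≤ p := abs_nonneg _
  have hqn : 0 ≤ q := abs_nonneg _
  have step1 : (h ^ 2 + p ^ 2) * (h ^ 2 + q ^ 2) ≤ a ^ 2 * b ^ 2 :=
    mul_le_mul P1' P2' (by positivity) (sq_nonneg a)
  have step2 : (p * q + h ^ 2) ^ 2 ≤ (h ^ 2 + p ^ 2) * (h ^ 2 + q ^ 2) := by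
    nlinarith [mul_nonneg (sq_nonneg h) (sq_nonneg (p - q))]
  have step3 : p * q + h ^ 2 ≤ a * b := by
    nlinarith [mul_nonneg ha hb, mul_nonneg hpn hqn, sq_nonneg h]
  nlinarith [sq_nonneg h, hy_on_xγx, hy_on_axis_seg, P1', P2', step3]
end
end

section
/- Let (X_n, d_n, ⋆_n) be a sequence of pointed CAT(0) metric spaces, each with an isometric action of a group Γ such that the diagonal action is admissible (i.e. lim_ω d_n(⋆_n, γ⋆_n) < ∞ for all γ ∈ Γ), and let X_ω be the ultralimit for a non-principal ultrafilter ω, with the induced isometric Γ-action γ[x_n] = [γx_n]. Then for every γ ∈ Γ the translation length satisfies ℓ_{X_ω}(γ) = lim_ω ℓ_{X_n}(γ), provided lim_ω d_n(⋆_n, A_n) < ∞ where A_n is either a translation axis of γ in X_n (if γ is hyperbolic in X_n) or a fixed point of γ (if γ is elliptic in X_n) for ω-almost all n. -/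
open Metric Set Filter

noncomputable section

/-- A sequence of points `f n ∈ X n` is admissible if it stays at `ω`-bounded
distance from the basepoints `b n`. -/
def Admissible (ω : Ultrafilter ℕ) {X : ℕ → Type*} [∀ n, MetricSpace (X n)]
    (b : ∀ n, X n) (f : ∀ n, X n) : Prop :=
  ∃ C : ℝ, ∀ᶠ n in (ω : Filter ℕ), dist (f n) (b n) ≤ C

/-- `(Y, p)` is the ultralimit of the pointed spaces `(X n, b n)` along `ω`. -/
def IsUltralimit (ω : Ultrafilter ℕ) {X : ℕ → Type*} [∀ n, MetricSpace (X n)]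
    (b : ∀ n, X n) (Y : Type*) [MetricSpace Y]
    (p : {f : ∀ n, X n // Admissible ω b f} → Y) : Prop :=
  Function.Surjective p ∧
    ∀ f g : {f : ∀ n, X n // Admissible ω b f},
      Tendsto (fun n => dist (f.1 n) (g.1 n)) (ω : Filter ℕ)
        (nhds (dist (p f) (p g)))

/-- Translation length `ℓ_X(γ) = inf_{x ∈ X} d(x, γ·x)` of a group element acting
by isometries. -/
noncomputable def actTransLen (Γ : Type*) [Group Γ] (X : Type*) [MetricSpace X]
    [MulAction Γ X] (γ : Γ) : ℝ :=
  ⨅ x : X, dist x (γ • x)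

/-- For a sequence of pointed CAT(0) spaces with an admissible isometric
`Γ`-action, and the induced action `γ [x_n] = [γ x_n]` on the ultralimit `Y = X_ω`,
the translation length satisfies `ℓ_{X_ω}(γ) = lim_ω ℓ_{X_n}(γ)`, provided
`lim_ω d_n(⋆_n, A_n) < ∞` where `A_n` is either a translation axis of `γ` in `X_n`
(if `γ` is hyperbolic there) or a fixed point of `γ` (if `γ` is elliptic there); in
both cases this is expressed by an admissible sequence `a` of points realizing the
translation length: `d(a_n, γ a_n) = ℓ_{X_n}(γ)` for `ω`-almost all `n`. -/
theorem ultralimit_translation_length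
    (ω : Ultrafilter ℕ) (hω : ∀ n : ℕ, (ω : Filter ℕ) ≠ pure n)
    (Γ : Type*) [Group Γ]
    (X : ℕ → Type*) [∀ n, MetricSpace (X n)] [∀ n, MulAction Γ (X n)]
    (hcat : ∀ n, CAT0 (X n))
    (hiso : ∀ n, ∀ γ : Γ, Isometry (fun x : X n => γ • x))
    (b : ∀ n, X n)
    -- the diagonal action is admissible:
    (hadm : ∀ γ : Γ, ∃ C : ℝ, ∀ᶠ n in (ω : Filter ℕ), dist (b n) (γ • b n) ≤ C)
    (Y : Type*) [MetricSpace Y] [MulAction Γ Y]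
    (hisoY : ∀ γ : Γ, Isometry (fun y : Y => γ • y))
    (p : {f : ∀ n, X n // Admissible ω b f} → Y)
    (hp : IsUltralimit ω b Y p)
    -- the action on `Y` is the induced one: `γ [x_n] = [γ x_n]`
    (hequiv : ∀ (γ : Γ) (f g : {f : ∀ n, X n // Admissible ω b f}),
      (∀ n, g.1 n = γ • f.1 n) → p g = γ • p f)
    (γ : Γ)
    (a : ∀ n, X n) (ha_adm : Admissible ω b a)
    (ha : ∀ᶠ n in (ω : Filter ℕ), dist (a n) (γ • a n) = actTransLen Γ (X n) γ) :
    Tendsto (fun n => actTransLen Γ (X n) γ) (ω : Filter ℕ)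
      (nhds (actTransLen Γ Y γ)) := by
  -- any admissible sequence stays admissible after acting by `γ`
  have hsmul_adm : ∀ f : ∀ n, X n, Admissible ω b f →
      Admissible ω b (fun n => γ • f n) := by
    rintro f ⟨C, hC⟩
    obtain ⟨C', hC'⟩ := hadm γ
    refine ⟨C + C', ?_⟩
    filter_upwards [hC, hC'] with n h1 h2
    calc dist (γ • f n) (b n) ≤ dist (γ • f n) (γ • b n) + dist (γ • b n) (b n) :=
          dist_triangle _ _ _
      _ = dist (f n) (b n) + dist (b n) (γ • b n) := by
          rw [(hiso n γ).dist_eq, dist_comm (γ • b n)]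
      _ ≤ C + C' := add_le_add h1 h2
  set F : {f : ∀ n, X n // Admissible ω b f} := ⟨a, ha_adm⟩
  set G : {f : ∀ n, X n // Admissible ω b f} := ⟨fun n => γ • a n, hsmul_adm a ha_adm⟩
  have hPG : p G = γ • p F := hequiv γ F G (fun n => rfl)
  have hten : Tendsto (fun n => dist (a n) (γ • a n)) (ω : Filter ℕ)
      (nhds (dist (p F) (γ • p F))) := by
    simpa [hPG] using hp.2 F G
  have hten' : Tendsto (fun n => actTransLen Γ (X n) γ) (ω : Filter ℕ)
      (nhds (dist (p F) (γ • p F))) := Tendsto.congr' ha hten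
  haveI : Nonempty Y := ⟨p F⟩
  have key : dist (p F) (γ • p F) = actTransLen Γ Y γ := by
    apply le_antisymm
    · -- ≤ : every point of Y gives an upper bound for lim ℓ_n
      refine le_ciInf fun y => ?_
      obtain ⟨f, rfl⟩ := hp.1 y
      set g : {f : ∀ n, X n // Admissible ω b f} := ⟨fun n => γ • f.1 n, hsmul_adm f.1 f.2⟩
      have hpg : p g = γ • p f := hequiv γ f g (fun n => rfl)
      have hten2 : Tendsto (fun n => dist (f.1 n) (γ • f.1 n)) (ω : Filter ℕ)
          (nhds (dist (p f) (γ • p f))) := by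
        simpa [hpg] using hp.2 f g
      refine le_of_tendsto_of_tendsto' hten' hten2 fun n => ?_
      exact ciInf_le ⟨0, by rintro _ ⟨z, rfl⟩; exact dist_nonneg⟩ (f.1 n)
    · exact ciInf_le ⟨0, by rintro _ ⟨z, rfl⟩; exact dist_nonneg⟩ (p F)
  rw [← key]; exact hten'
end
end

section
/- Let X be a complete CAT(0) space with an isometric action of a group Γ, let γ ∈ Γ be hyperbolic with translation axis A, and suppose that for points x_n with d(x_n, A) = r_n and with projections x_{n⊥} ∈ A, the segments [x_n, γx_n], [γx_n, γ²x_n], [x_n, γ²x_n] all meet A. Then |d(x_n, γ²x_n) − d(x_n, γx_n) − d(γx_n, γ²x_n)| ≥ d(x_n, x_{n⊥})² / d(x_n, γx_n). Consequently, if |d(x,γ²x) − 2 d(x,γx)| < 3ε and d(x, γx) ≤ ℓ(γ) + ε, then d(x, A)² ≤ 3ε(ℓ(γ) + ε) and |d(x, γx) − ℓ(γ)| ≤ 2√(3ε(ℓ(γ)+ε)). -/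
open Metric Set

noncomputable section

lemma cat0_midpoint_cn {X : Type*} [MetricSpace X] (hX : CAT0 X)
    (g : ℝ → X) (hg : Isometry g) (w : X) (u v : ℝ) :
    dist w (g ((u + v) / 2)) ^ 2 ≤
      (dist w (g u) ^ 2 + dist w (g v) ^ 2) / 2 - (u - v) ^ 2 / 4 := by
  have h1 : dist (g u) (g ((u + v) / 2)) = dist (g u) (g v) / 2 := by
    rw [hg.dist_eq, hg.dist_eq, Real.dist_eq, Real.dist_eq,
      show u - (u + v) / 2 = (u - v) / 2 by ring, abs_div, abs_two]
  have h2 : dist (g ((u + v) / 2)) (g v) = dist (g u) (g v) / 2 := by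
    rw [hg.dist_eq, hg.dist_eq, Real.dist_eq, Real.dist_eq,
      show (u + v) / 2 - v = (u - v) / 2 by ring, abs_div, abs_two]
  have h3 := hX.2 w (g u) (g v) (g ((u + v) / 2)) h1 h2
  rwa [hg.dist_eq, Real.dist_eq, sq_abs] at h3

lemma cat0_pythagoras {X : Type*} [MetricSpace X] (hX : CAT0 X)
    (g : ℝ → X) (hg : Isometry g) (w : X) (s : ℝ)
    (hs : ∀ u : ℝ, dist w (g s) ≤ dist w (g u)) (t : ℝ) :
    dist w (g s) ^ 2 + (t - s) ^ 2 ≤ dist w (g t) ^ 2 := by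
  set Δ : ℝ := dist w (g t) ^ 2 - (t - s) ^ 2 - dist w (g s) ^ 2 with hΔ
  have key : ∀ n : ℕ, dist w (g (s + (t - s) / 2 ^ n)) ^ 2 ≤
      dist w (g s) ^ 2 + ((t - s) / 2 ^ n) ^ 2 + Δ / 2 ^ n := by
    intro n
    induction n with
    | zero =>
      rw [show s + (t - s) / 2 ^ 0 = t by norm_num]
      simp only [pow_zero, div_one]
      linarith [hΔ]
    | succ n ih =>
      have hm := cat0_midpoint_cn hX g hg w s (s + (t - s) / 2 ^ n)
      have e1 : (s + (s + (t - s) / 2 ^ n)) / 2 = s + (t - s) / 2 ^ (n + 1) := by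
        field_simp
        ring
      have e2 : (s - (s + (t - s) / 2 ^ n)) ^ 2 = ((t - s) / 2 ^ n) ^ 2 := by ring
      rw [e1, e2] at hm
      have goal_eq : dist w (g s) ^ 2 + ((t - s) / 2 ^ (n + 1)) ^ 2 + Δ / 2 ^ (n + 1)
          = (dist w (g s) ^ 2 + (dist w (g s) ^ 2 + ((t - s) / 2 ^ n) ^ 2 + Δ / 2 ^ n)) / 2
            - ((t - s) / 2 ^ n) ^ 2 / 4 := by
        field_simp
        ring
      rw [goal_eq]
      linarith [hm, ih]
  have hbound : ∀ n : ℕ, -Δ ≤ (t - s) ^ 2 / 2 ^ n := by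
    intro n
    have hc : (0 : ℝ) < 2 ^ n := by positivity
    have h0 : dist w (g s) ^ 2 ≤ dist w (g (s + (t - s) / 2 ^ n)) ^ 2 :=
      pow_le_pow_left₀ dist_nonneg (hs _) 2
    have h1 : 0 ≤ ((t - s) / 2 ^ n) ^ 2 + Δ / 2 ^ n := by linarith [key n, h0]
    have h2 : ((t - s) / 2 ^ n) ^ 2 + Δ / 2 ^ n = ((t - s) ^ 2 / 2 ^ n + Δ) / 2 ^ n := by
      field_simp
    rw [h2] at h1
    have h3 := (le_div_iff₀ hc).mp h1
    linarith
  have hlim : Filter.Tendsto (fun n : ℕ => (t - s) ^ 2 / 2 ^ n) Filter.atTop (nhds 0) := by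
    have h := tendsto_pow_atTop_nhds_zero_of_lt_one (by norm_num : (0:ℝ) ≤ 1/2)
      (by norm_num : (1:ℝ)/2 < 1)
    have h' := h.const_mul ((t - s) ^ 2)
    simpa [div_eq_mul_inv, inv_pow] using h'
  have hfin : -Δ ≤ 0 := ge_of_tendsto' hlim hbound
  linarith


set_option maxHeartbeats 1600000 in
/-- quantitative estimate for translation lengths. Let `X` be a complete
CAT(0) space, `γ` a hyperbolic isometry with translation axis `A`, `x` a point with
projection `x⊥ ∈ A`, and suppose the segments `[x, γx]`, `[γx, γ²x]`, `[x, γ²x]`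
all meet `A` (meeting a segment is expressed by additivity of distances). Then
`|d(x, γ²x) − d(x, γx) − d(γx, γ²x)| ≥ d(x, x⊥)² / d(x, γx)`. Consequently, if
`|d(x, γ²x) − 2 d(x, γx)| < 3ε` and `d(x, γx) ≤ ℓ(γ) + ε`, then
`d(x, x⊥)² ≤ 3ε(ℓ(γ) + ε)` and `|d(x, γx) − ℓ(γ)| ≤ 2√(3ε(ℓ(γ)+ε))`. -/
theorem translation_length_quantitative_estimate
    {X : Type*} [MetricSpace X] [CompleteSpace X] (hX : CAT0 X)
    (γ : X ≃ᵢ X) (hpos : 0 < translationLength γ)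
    (A : Set X) (hA : IsTranslationAxis γ A)
    (x xp : X) (hxpA : xp ∈ A) (hproj : ∀ a ∈ A, dist x xp ≤ dist x a)
    (hmeet₁ : ∃ y ∈ A, dist x y + dist y (γ x) = dist x (γ x))
    (hmeet₂ : ∃ y ∈ A, dist (γ x) y + dist y (γ (γ x)) = dist (γ x) (γ (γ x)))
    (hmeet₃ : ∃ y ∈ A, dist x y + dist y (γ (γ x)) = dist x (γ (γ x)))
    (hxγ : 0 < dist x (γ x))
    (ε : ℝ) (hε : 0 < ε)
    (hquasi : |dist x (γ (γ x)) - 2 * dist x (γ x)| < 3 * ε)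
    (hle : dist x (γ x) ≤ translationLength γ + ε) :
    dist x xp ^ 2 / dist x (γ x) ≤
        |dist x (γ (γ x)) - dist x (γ x) - dist (γ x) (γ (γ x))| ∧
      dist x xp ^ 2 ≤ 3 * ε * (translationLength γ + ε) ∧
      |dist x (γ x) - translationLength γ| ≤
        2 * Real.sqrt (3 * ε * (translationLength γ + ε)) := by
  obtain ⟨g, hg, hrange, hax⟩ := hA
  set L : ℝ := translationLength γ with hL
  have hγdist : ∀ a b : X, dist (γ a) (γ b) = dist a b := fun a b => γ.dist_eq a b
  -- coordinates
  obtain ⟨s₀, hs₀⟩ : xp ∈ range g := by rw [hrange]; exact hxpA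
  obtain ⟨y₁, hy₁A, hy₁⟩ := hmeet₁
  obtain ⟨y₂, hy₂A, hy₂⟩ := hmeet₂
  obtain ⟨t₁, ht₁⟩ : y₁ ∈ range g := by rw [hrange]; exact hy₁A
  obtain ⟨t₂, ht₂⟩ : y₂ ∈ range g := by rw [hrange]; exact hy₂A
  subst ht₁
  subst ht₂
  set p : ℝ := s₀ + L with hp
  have hγxp : γ xp = g p := by rw [← hs₀, hax]
  -- projection property of g p for γ x
  have hprojγ : ∀ u : ℝ, dist (γ x) (g p) ≤ dist (γ x) (g u) := by
    intro u
    have hgu : γ (g (u - L)) = g u := by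
      rw [hax, sub_add_cancel]
    rw [← hγxp, hγdist, ← hgu, hγdist]
    exact hproj _ (by rw [← hrange]; exact mem_range_self _)
  -- Pythagoras for the two meeting points
  have hr : dist (γ x) (g p) = dist x xp := by rw [← hγxp, hγdist]
  have P1 : dist x xp ^ 2 + (t₁ - p) ^ 2 ≤ dist (γ x) (g t₁) ^ 2 := by
    have := cat0_pythagoras hX g hg (γ x) p hprojγ t₁
    rwa [hr] at this
  have P2 : dist x xp ^ 2 + (t₂ - p) ^ 2 ≤ dist (γ x) (g t₂) ^ 2 := by
    have := cat0_pythagoras hX g hg (γ x) p hprojγ t₂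
    rwa [hr] at this
  set d : ℝ := dist x (γ x) with hd
  set r : ℝ := dist x xp with hrr
  set D : ℝ := dist x (γ (γ x)) with hD
  clear_value L d r D
  have hdγ : dist (γ x) (γ (γ x)) = d := by rw [hd]; exact hγdist x (γ x)
  -- distances to the axis points
  have ha_le : dist (γ x) (g t₁) ≤ d := by
    rw [dist_comm]
    linarith [hy₁, dist_nonneg (x := x) (y := g t₁)]
  have hb_le : dist (γ x) (g t₂) ≤ d := by
    rw [hdγ] at hy₂
    linarith [hy₂, dist_nonneg (x := g t₂) (y := γ (γ x))]
  -- q ≤ a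
  have keygen : ∀ (a q' : ℝ), r ^ 2 + q' ^ 2 ≤ a ^ 2 → 0 ≤ a → a ≤ d →
      r ^ 2 ≤ 2 * d * (a - |q'|) := by
    intro a q' hP ha0 had
    have h5 : |q'| ^ 2 ≤ a ^ 2 := by
      rw [sq_abs]
      linarith [sq_nonneg r]
    have hq : |q'| ≤ a := by
      nlinarith [abs_nonneg q', h5]
    have h1 : a + |q'| ≤ 2 * d := by linarith
    have h2 : (0:ℝ) ≤ a - |q'| := by linarith
    have h3 : (a + |q'|) * (a - |q'|) ≤ 2 * d * (a - |q'|) :=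
      mul_le_mul_of_nonneg_right h1 h2
    have h4 : (a + |q'|) * (a - |q'|) = a ^ 2 - |q'| ^ 2 := by ring
    rw [sq_abs] at h4
    linarith
  have key1 : r ^ 2 ≤ 2 * d * (dist (γ x) (g t₁) - |t₁ - p|) :=
    keygen _ _ P1 dist_nonneg ha_le
  have key2 : r ^ 2 ≤ 2 * d * (dist (γ x) (g t₂) - |t₂ - p|) :=
    keygen _ _ P2 dist_nonneg hb_le
  -- chain inequality
  have hchain : D ≤ dist x (g t₁) + (|t₁ - p| + |t₂ - p|) + dist (g t₂) (γ (γ x)) := by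
    have h1 : D ≤ dist x (g t₁) + dist (g t₁) (g t₂) + dist (g t₂) (γ (γ x)) := by
      calc D ≤ dist x (g t₂) + dist (g t₂) (γ (γ x)) := by
              rw [hD]; exact dist_triangle _ _ _
        _ ≤ dist x (g t₁) + dist (g t₁) (g t₂) + dist (g t₂) (γ (γ x)) := by
            linarith [dist_triangle x (g t₁) (g t₂)]
    have h2 : dist (g t₁) (g t₂) ≤ |t₁ - p| + |t₂ - p| := by
      rw [hg.dist_eq, Real.dist_eq]
      calc |t₁ - t₂| = |(t₁ - p) + (p - t₂)| := by ring_nf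
        _ ≤ |t₁ - p| + |p - t₂| := abs_add_le _ _
        _ = |t₁ - p| + |t₂ - p| := by rw [abs_sub_comm p t₂]
    linarith
  have hsum1 : dist x (g t₁) + dist (γ x) (g t₁) = d := by
    rw [dist_comm (γ x) (g t₁)]; linarith [hy₁]
  have hsum2 : dist (γ x) (g t₂) + dist (g t₂) (γ (γ x)) = d := by
    rw [← hdγ]; exact hy₂
  -- main estimate: r² ≤ d (2d − D)
  have hmain : r ^ 2 ≤ d * (2 * d - D) := by
    have hgap : (dist (γ x) (g t₁) - |t₁ - p|) + (dist (γ x) (g t₂) - |t₂ - p|)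
        ≤ 2 * d - D := by linarith
    have hgap2 : 2 * d * ((dist (γ x) (g t₁) - |t₁ - p|) + (dist (γ x) (g t₂) - |t₂ - p|))
        ≤ 2 * d * (2 * d - D) := mul_le_mul_of_nonneg_left hgap (by linarith)
    nlinarith [key1, key2, hgap2]
  have hD2 : D ≤ 2 * d := by
    have h := dist_triangle x (γ x) (γ (γ x))
    rw [hdγ] at h
    linarith [hD, hd, h]
  -- Goal 1
  have goal1 : r ^ 2 / d ≤ |D - d - dist (γ x) (γ (γ x))| := by
    rw [hdγ, show D - d - d = -(2 * d - D) by ring, abs_neg,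
      abs_of_nonneg (by linarith), div_le_iff₀ hxγ]
    linarith [hmain, mul_comm d (2 * d - D)]
  refine ⟨goal1, ?_, ?_⟩
  · -- Goal 2
    have h1 : r ^ 2 / d < 3 * ε := by
      have h2 : |D - d - dist (γ x) (γ (γ x))| = |D - 2 * d| := by
        rw [hdγ]; congr 1; ring
      rw [h2] at goal1
      exact lt_of_le_of_lt goal1 hquasi
    have h3 : r ^ 2 < 3 * ε * d := by
      rw [div_lt_iff₀ hxγ] at h1; linarith
    have h4 : 3 * ε * d ≤ 3 * ε * (L + ε) :=
      mul_le_mul_of_nonneg_left hle (by linarith)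
    linarith [h3, h4]
  · -- Goal 3
    have hℓd : L ≤ d := by
      have hbb : BddBelow (range fun y : X => dist y (γ y)) := by
        refine ⟨0, ?_⟩
        rintro _ ⟨y, rfl⟩
        exact dist_nonneg
      have h5 : translationLength γ ≤ dist x (γ x) := ciInf_le hbb x
      rw [hL, hd]
      exact h5
    have hεsq : ε ≤ Real.sqrt (3 * ε * (L + ε)) := by
      have h6 : ε ^ 2 ≤ 3 * ε * (L + ε) := by nlinarith [hpos, hε]
      calc ε = Real.sqrt (ε ^ 2) := (Real.sqrt_sq hε.le).symm
        _ ≤ Real.sqrt (3 * ε * (L + ε)) := Real.sqrt_le_sqrt h6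
    rw [abs_of_nonneg (by linarith)]
    have := Real.sqrt_nonneg (3 * ε * (L + ε))
    linarith
end
end
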